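/- arXiv:2402.19342 — 3 statements merged into one kernel-verified Lean document; each statement's English description precedes it below -/
import Mathlib

section
/- Let F, G: C × D → W be braiding-preserved E-bilinear bifunctors between braided E-modules, with E-bilinear structures (s^{F1}, s^{F2}), (s^{G1}, s^{G2}) and balanced structures b^F, b^G. Let α: F ⇒ G be a natural transformation which is a balanced E-module natural transformation (α_{c, e⊙d} ∘ b^F_{c,e,d} = b^G_{c,e,d} ∘ α_{c⊙e, d}) and which, for each object d of D, is a left E-module natural transformation (F(−,d), s^{F1}) ⇒ (G(−,d), s^{G1}). Then for each object c of C, α is a left E-module natural transformation (F(c,−), s^{F2}) ⇒ (G(c,−), s^{G2}); that is, s^{G2}_{e,d} ∘ α_{c, e⊙d} = (1_e ⊙ α_{c,d}) ∘ s^{F2}_{e,d} for all e in E, d in D. -/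
/-!
Statement 0.

Let `E` be a symmetric fusion category (over an algebraically closed field `k` of
characteristic zero) with braiding `r = β_`, and let `(C, τ)` be a braided `E`-module,
i.e. a (finite semisimple) left `E`-module category equipped with an `E`-module braiding
`τ = τ² ∘ τ¹` (where the right `E`-action on `C` is induced from the left action,
`x ⊙ e := e ⊙ x`, and all structural identifications are made explicit via the
action associator `μ`, the induced right-associator `rAssoc` and the middle-exchange
isomorphism `ex`).

Then for all `e e' : E` and `x : C`:
* `τ¹_{e, x ⊙ e'} = (1_x ⊙ r_{e,e'}) ∘ (τ¹_{e,x} ⊙ 1_{e'})` as morphisms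
  `e ⊙ x ⊙ e' ⟶ x ⊙ e' ⊙ e`, and
* `τ²_{x ⊙ e', e} = (τ²_{x,e} ⊙ 1_{e'}) ∘ (1_x ⊙ r_{e',e})` as morphisms
  `x ⊙ e' ⊙ e ⟶ e ⊙ x ⊙ e'`.
-/

open CategoryTheory MonoidalCategory Category

universe v u v' u'

/-- A left module category over a monoidal category `E`: an action bifunctor together with
coherent associativity and unit isomorphisms.  (In the paper the module categories are
moreover finite semisimple `k`-linear; this plays no role in the statement below.) -/
structure LeftModuleCatStruct (E : Type u) [Category.{v} E] [MonoidalCategory E]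
    (C : Type u') [Category.{v'} C] where
  /-- the action bifunctor `(e, x) ↦ e ⊙ x` -/
  act : E ⥤ C ⥤ C
  /-- the associator `(e ⊗ e') ⊙ x ≅ e ⊙ (e' ⊙ x)` -/
  assocIso : ∀ e e' : E, act.obj (e ⊗ e') ≅ act.obj e' ⋙ act.obj e
  /-- the unitor `𝟙_E ⊙ x ≅ x` -/
  unitIso : act.obj (𝟙_ E) ≅ 𝟭 C
  assoc_natural :
    ∀ {e₁ e₂ e₁' e₂' : E} (f : e₁ ⟶ e₁') (g : e₂ ⟶ e₂') (x : C),
      (act.map (f ⊗ₘ g)).app x ≫ (assocIso e₁' e₂').hom.app x =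
        (assocIso e₁ e₂).hom.app x ≫ (act.obj e₁).map ((act.map g).app x) ≫
          (act.map f).app ((act.obj e₂').obj x)
  pentagon :
    ∀ (e₁ e₂ e₃ : E) (x : C),
      (assocIso (e₁ ⊗ e₂) e₃).hom.app x ≫ (assocIso e₁ e₂).hom.app ((act.obj e₃).obj x) =
        (act.map (α_ e₁ e₂ e₃).hom).app x ≫ (assocIso e₁ (e₂ ⊗ e₃)).hom.app x ≫
          (act.obj e₁).map ((assocIso e₂ e₃).hom.app x)
  unit_act :
    ∀ (e : E) (x : C),
      (assocIso (𝟙_ E) e).hom.app x ≫ unitIso.hom.app ((act.obj e).obj x) =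
        (act.map (λ_ e).hom).app x
  act_unit :
    ∀ (e : E) (x : C),
      (assocIso e (𝟙_ E)).hom.app x ≫ (act.obj e).map (unitIso.hom.app x) =
        (act.map (ρ_ e).hom).app x

namespace LeftModuleCatStruct

variable {E : Type u} [Category.{v} E] [MonoidalCategory E] [BraidedCategory E]
variable {C : Type u'} [Category.{v'} C]
variable (M : LeftModuleCatStruct E C)

/-- `e ⊙ x`.  The induced right action is `x ⊙ e := e ⊙ x`. -/
def smul (e : E) (x : C) : C := (M.act.obj e).obj x

/-- The associator `μ_{e,e',x} : (e ⊗ e') ⊙ x ≅ e ⊙ (e' ⊙ x)`. -/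
def μ (e e' : E) (x : C) : M.smul (e ⊗ e') x ≅ M.smul e (M.smul e' x) :=
  (M.assocIso e e').app x

/-- The associator of the induced right action,
`x ⊙ (e ⊗ e') = (e ⊗ e') ⊙ x ≅ e' ⊙ (e ⊙ x) = (x ⊙ e) ⊙ e'`, built from the braiding of `E`. -/
def rAssoc (e e' : E) (x : C) : M.smul (e ⊗ e') x ≅ M.smul e' (M.smul e x) :=
  (M.act.mapIso (β_ e e')).app x ≪≫ (M.assocIso e' e).app x

/-- The middle-exchange isomorphism
`(e ⊙ x) ⊙ e' = e' ⊙ (e ⊙ x) ≅ e ⊙ (e' ⊙ x) = e ⊙ (x ⊙ e')` (read backwards),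
i.e. the canonical identification `e ⊙ (e' ⊙ x) ≅ e' ⊙ (e ⊙ x)` coming from the braiding. -/
def ex (e e' : E) (x : C) : M.smul e (M.smul e' x) ≅ M.smul e' (M.smul e x) :=
  ((M.assocIso e e').app x).symm ≪≫ (M.act.mapIso (β_ e e')).app x ≪≫ (M.assocIso e' e).app x

/-- An `E`-module braiding on a left `E`-module category `C` (Definition 2.2 of the paper):
natural isomorphisms `τ¹_{e,x} : e ⊙ x ⟶ x ⊙ e` and `τ²_{x,e} : x ⊙ e ⟶ e ⊙ x`
(the right action being induced from the left one, both are recorded as automorphisms of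
`e ⊙ x`), with `τ_{𝟙,x} = id` and satisfying the four compatibility diagrams
(2.1) and (2.2) of the paper, written with all structural isomorphisms explicit. -/
structure ModuleBraiding where
  τ₁ : ∀ (e : E) (x : C), M.smul e x ≅ M.smul e x
  τ₂ : ∀ (x : C) (e : E), M.smul e x ≅ M.smul e x
  τ₁_nat_left :
    ∀ {e e' : E} (f : e ⟶ e') (x : C),
      (M.act.map f).app x ≫ (τ₁ e' x).hom = (τ₁ e x).hom ≫ (M.act.map f).app x
  τ₁_nat_right :
    ∀ (e : E) {x y : C} (g : x ⟶ y),
      (M.act.obj e).map g ≫ (τ₁ e y).hom = (τ₁ e x).hom ≫ (M.act.obj e).map g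
  τ₂_nat_left :
    ∀ {e e' : E} (f : e ⟶ e') (x : C),
      (M.act.map f).app x ≫ (τ₂ x e').hom = (τ₂ x e).hom ≫ (M.act.map f).app x
  τ₂_nat_right :
    ∀ (e : E) {x y : C} (g : x ⟶ y),
      (M.act.obj e).map g ≫ (τ₂ y e).hom = (τ₂ x e).hom ≫ (M.act.obj e).map g
  /-- `τ_{𝟙_E, x} = id` -/
  unit_braiding : ∀ x : C, (τ₁ (𝟙_ E) x).hom ≫ (τ₂ x (𝟙_ E)).hom = 𝟙 _
  /-- `τ¹_{e, e' ⊙ x} = (1_{e'} ⊙ τ¹_{e,x}) ∘ (r_{e,e'} ⊙ 1_x)` (first diagram of (2.1)) -/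
  braiding₁_act :
    ∀ (e e' : E) (x : C),
      (τ₁ e (M.smul e' x)).hom ≫ (M.ex e e' x).hom =
        (M.ex e e' x).hom ≫ (M.act.obj e').map (τ₁ e x).hom
  /-- `τ²_{e' ⊙ x, e} = (r_{e',e} ⊙ 1_x) ∘ (1_{e'} ⊙ τ²_{x,e})` (second diagram of (2.1)) -/
  act_braiding₂ :
    ∀ (e e' : E) (x : C),
      (M.ex e e' x).inv ≫ (τ₂ (M.smul e' x) e).hom =
        (M.act.obj e').map (τ₂ x e).hom ≫ (M.ex e' e x).hom
  /-- `τ¹_{e ⊗ e', x} = (τ¹_{e,x} ⊙ 1_{e'}) ∘ (1_e ⊙ τ¹_{e',x})` (first diagram of (2.2)) -/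
  braiding₁_tensor :
    ∀ (e e' : E) (x : C),
      (τ₁ (e ⊗ e') x).hom ≫ (M.rAssoc e e' x).hom =
        (M.μ e e' x).hom ≫ (M.act.obj e).map (τ₁ e' x).hom ≫ (M.ex e e' x).hom ≫
          (M.act.obj e').map (τ₁ e x).hom
  /-- `τ²_{x, e ⊗ e'} = (1_e ⊙ τ²_{x,e'}) ∘ (τ²_{x,e} ⊙ 1_{e'})` (second diagram of (2.2)) -/
  tensor_braiding₂ :
    ∀ (e e' : E) (x : C),
      (M.rAssoc e e' x).inv ≫ (τ₂ x (e ⊗ e')).hom ≫ (M.μ e e' x).hom =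
        (M.act.obj e').map (τ₂ x e).hom ≫ (M.ex e e' x).inv ≫
          (M.act.obj e).map (τ₂ x e').hom

end LeftModuleCatStruct


section Bifunctor

variable {E : Type u} [Category.{v} E] [MonoidalCategory E] [BraidedCategory E]
variable {C : Type*} [Category C] {D : Type*} [Category D] {W : Type*} [Category W]

/-- An `E`-bilinear bifunctor `F : C × D → W` between left `E`-module categories:
a bifunctor which is a left `E`-module functor in each variable separately
(via `s¹` and `s²`), naturally in the other variable. -/
structure EBilinearBifunctor (MC : LeftModuleCatStruct E C)
    (MD : LeftModuleCatStruct E D) (MW : LeftModuleCatStruct E W) where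
  F : C ⥤ D ⥤ W
  /-- `s¹_{e,c} : F(e ⊙ c, d) ≅ e ⊙ F(c, d)` -/
  s₁ : ∀ (e : E) (c : C) (d : D), (F.obj (MC.smul e c)).obj d ≅ MW.smul e ((F.obj c).obj d)
  /-- `s²_{e,d} : F(c, e ⊙ d) ≅ e ⊙ F(c, d)` -/
  s₂ : ∀ (e : E) (c : C) (d : D), (F.obj c).obj (MD.smul e d) ≅ MW.smul e ((F.obj c).obj d)
  s₁_nat_e : ∀ {e e' : E} (f : e ⟶ e') (c : C) (d : D),
    (F.map ((MC.act.map f).app c)).app d ≫ (s₁ e' c d).hom =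
      (s₁ e c d).hom ≫ (MW.act.map f).app ((F.obj c).obj d)
  s₁_nat_c : ∀ (e : E) {c c' : C} (f : c ⟶ c') (d : D),
    (F.map ((MC.act.obj e).map f)).app d ≫ (s₁ e c' d).hom =
      (s₁ e c d).hom ≫ (MW.act.obj e).map ((F.map f).app d)
  s₁_nat_d : ∀ (e : E) (c : C) {d d' : D} (g : d ⟶ d'),
    (F.obj (MC.smul e c)).map g ≫ (s₁ e c d').hom =
      (s₁ e c d).hom ≫ (MW.act.obj e).map ((F.obj c).map g)
  s₂_nat_e : ∀ {e e' : E} (f : e ⟶ e') (c : C) (d : D),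
    (F.obj c).map ((MD.act.map f).app d) ≫ (s₂ e' c d).hom =
      (s₂ e c d).hom ≫ (MW.act.map f).app ((F.obj c).obj d)
  s₂_nat_c : ∀ (e : E) {c c' : C} (f : c ⟶ c') (d : D),
    (F.map f).app (MD.smul e d) ≫ (s₂ e c' d).hom =
      (s₂ e c d).hom ≫ (MW.act.obj e).map ((F.map f).app d)
  s₂_nat_d : ∀ (e : E) (c : C) {d d' : D} (g : d ⟶ d'),
    (F.obj c).map ((MD.act.obj e).map g) ≫ (s₂ e c d').hom =
      (s₂ e c d).hom ≫ (MW.act.obj e).map ((F.obj c).map g)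
  s₁_tensor : ∀ (e e' : E) (c : C) (d : D),
    (F.map (MC.μ e e' c).hom).app d ≫ (s₁ e (MC.smul e' c) d).hom ≫
        (MW.act.obj e).map (s₁ e' c d).hom =
      (s₁ (e ⊗ e') c d).hom ≫ (MW.μ e e' ((F.obj c).obj d)).hom
  s₁_unit : ∀ (c : C) (d : D),
    (s₁ (𝟙_ E) c d).hom ≫ MW.unitIso.hom.app ((F.obj c).obj d) =
      (F.map (MC.unitIso.hom.app c)).app d
  s₂_tensor : ∀ (e e' : E) (c : C) (d : D),
    (F.obj c).map (MD.μ e e' d).hom ≫ (s₂ e c (MD.smul e' d)).hom ≫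
        (MW.act.obj e).map (s₂ e' c d).hom =
      (s₂ (e ⊗ e') c d).hom ≫ (MW.μ e e' ((F.obj c).obj d)).hom
  s₂_unit : ∀ (c : C) (d : D),
    (s₂ (𝟙_ E) c d).hom ≫ MW.unitIso.hom.app ((F.obj c).obj d) =
      (F.obj c).map (MD.unitIso.hom.app d)

namespace EBilinearBifunctor

variable {MC : LeftModuleCatStruct E C} {MD : LeftModuleCatStruct E D}
  {MW : LeftModuleCatStruct E W}

/-- The balanced `E`-module structure
`b_{c,e,d} : F(c ⊙ e, d) → F(e ⊙ c, d) → e ⊙ F(c,d) → F(c, e ⊙ d)`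
(using `τ^{C2}_{c,e}`, `s¹` and `(s²)⁻¹`). -/
def bal (T : EBilinearBifunctor MC MD MW) (BC : MC.ModuleBraiding)
    (c : C) (e : E) (d : D) :
    (T.F.obj (MC.smul e c)).obj d ⟶ (T.F.obj c).obj (MD.smul e d) :=
  (T.F.map (BC.τ₂ c e).hom).app d ≫ (T.s₁ e c d).hom ≫ (T.s₂ e c d).inv

/-- `b̂_{c,e,d} := (s²_{e,d})⁻¹ ∘ s¹_{e,c} : F(e ⊙ c, d) → F(c, e ⊙ d)`. -/
def bhat (T : EBilinearBifunctor MC MD MW) (c : C) (e : E) (d : D) :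
    (T.F.obj (MC.smul e c)).obj d ⟶ (T.F.obj c).obj (MD.smul e d) :=
  (T.s₁ e c d).hom ≫ (T.s₂ e c d).inv

end EBilinearBifunctor

/-- A braiding-preserved `E`-bilinear bifunctor `F : C × D → W` between braided
`E`-modules (Definition 2.7 of the paper): an `E`-bilinear bifunctor which is a
balanced `E`-module functor with respect to the balancing `b`, and such that `s¹` and
`(s²)⁻¹` intertwine the `E`-module braidings `τ^C`, `τ^W`, `τ^D`. -/
structure BraidingPreservedBifunctor (MC : LeftModuleCatStruct E C) (BC : MC.ModuleBraiding)
    (MD : LeftModuleCatStruct E D) (BD : MD.ModuleBraiding)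
    (MW : LeftModuleCatStruct E W) (BW : MW.ModuleBraiding) extends
      EBilinearBifunctor MC MD MW where
  balanced_tensor : ∀ (e e' : E) (c : C) (d : D),
    (F.map (MC.rAssoc e e' c).hom).app d ≫
        toEBilinearBifunctor.bal BC (MC.smul e c) e' d ≫
        toEBilinearBifunctor.bal BC c e (MD.smul e' d) =
      toEBilinearBifunctor.bal BC c (e ⊗ e') d ≫ (F.obj c).map (MD.μ e e' d).hom
  balanced_unit : ∀ (c : C) (d : D),
    toEBilinearBifunctor.bal BC c (𝟙_ E) d =
      (F.map (MC.unitIso.hom.app c)).app d ≫ (F.obj c).map (MD.unitIso.inv.app d)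
  preserve₁ : ∀ (e : E) (c : C) (d : D),
    (F.map ((BC.τ₁ e c).hom ≫ (BC.τ₂ c e).hom)).app d ≫ (s₁ e c d).hom =
      (s₁ e c d).hom ≫ (BW.τ₁ e ((F.obj c).obj d)).hom ≫ (BW.τ₂ ((F.obj c).obj d) e).hom
  preserve₂ : ∀ (e : E) (c : C) (d : D),
    (s₂ e c d).inv ≫ (F.obj c).map ((BD.τ₁ e d).hom ≫ (BD.τ₂ d e).hom) =
      (BW.τ₁ e ((F.obj c).obj d)).hom ≫ (BW.τ₂ ((F.obj c).obj d) e).hom ≫ (s₂ e c d).inv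

end Bifunctor

/-!
Unfolding the balanced structure, `b = F(τ²) ≫ s¹ ≫ (s²)⁻¹`. Since `α` is natural in the first
variable, it commutes with the isomorphism `F(τ²)`, which can therefore be cancelled; since `α`
intertwines `s¹`, the isomorphism `s¹` can be cancelled as well. What is left is exactly the
compatibility of `α` with `(s²)⁻¹`, i.e. with `s²`.
-/

namespace EBilinearBifunctor

variable {E : Type u} [Category.{v} E] [MonoidalCategory E]
variable {C : Type*} [Category C] {D : Type*} [Category D] {W : Type*} [Category W]
variable {MC : LeftModuleCatStruct E C} {MD : LeftModuleCatStruct E D}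
  {MW : LeftModuleCatStruct E W} (T T' : EBilinearBifunctor MC MD MW)

theorem s₂_comp_of_bhat_comp
    (α : ∀ (c : C) (d : D), (T.F.obj c).obj d ⟶ (T'.F.obj c).obj d)
    {c : C} {e : E} {d : D}
    (α_module₁ : α (MC.smul e c) d ≫ (T'.s₁ e c d).hom =
      (T.s₁ e c d).hom ≫ (MW.act.obj e).map (α c d))
    (h : T.bhat c e d ≫ α c (MD.smul e d) = α (MC.smul e c) d ≫ T'.bhat c e d) :
    α c (MD.smul e d) ≫ (T'.s₂ e c d).hom = (T.s₂ e c d).hom ≫ (MW.act.obj e).map (α c d) := by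
  have hinv : (T.s₂ e c d).inv ≫ α c (MD.smul e d) =
      (MW.act.obj e).map (α c d) ≫ (T'.s₂ e c d).inv := by
    refine (cancel_epi (T.s₁ e c d).hom).mp ?_
    calc (T.s₁ e c d).hom ≫ (T.s₂ e c d).inv ≫ α c (MD.smul e d)
        _ = α (MC.smul e c) d ≫ (T'.s₁ e c d).hom ≫ (T'.s₂ e c d).inv :=
          (Category.assoc _ _ _).symm.trans h
        _ = (T.s₁ e c d).hom ≫ (MW.act.obj e).map (α c d) ≫ (T'.s₂ e c d).inv := by
          rw [reassoc_of% α_module₁]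
          exact Category.assoc _ _ _
  refine (Iso.inv_comp_eq _).mp ?_
  rw [reassoc_of% hinv]
  exact (Category.assoc _ _ _).trans ((congrArg _ (Iso.inv_hom_id _)).trans (Category.comp_id _))

variable [BraidedCategory E]

theorem bal_eq_map_τ₂_comp_bhat (BC : MC.ModuleBraiding) (c : C) (e : E) (d : D) :
    T.bal BC c e d = (T.F.map (BC.τ₂ c e).hom).app d ≫ T.bhat c e d :=
  rfl

theorem bhat_comp_of_bal_comp (BC : MC.ModuleBraiding)
    (α : ∀ (c : C) (d : D), (T.F.obj c).obj d ⟶ (T'.F.obj c).obj d)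
    (α_nat_c : ∀ {c c' : C} (f : c ⟶ c') (d : D),
      (T.F.map f).app d ≫ α c' d = α c d ≫ (T'.F.map f).app d)
    {c : C} {e : E} {d : D}
    (h : T.bal BC c e d ≫ α c (MD.smul e d) = α (MC.smul e c) d ≫ T'.bal BC c e d) :
    T.bhat c e d ≫ α c (MD.smul e d) = α (MC.smul e c) d ≫ T'.bhat c e d := by
  rw [bal_eq_map_τ₂_comp_bhat, bal_eq_map_τ₂_comp_bhat, Category.assoc,
    ← reassoc_of% (α_nat_c (BC.τ₂ c e).hom d)] at h
  have : IsIso ((T.F.map (BC.τ₂ c e).hom).app d) :=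
    inferInstanceAs (IsIso ((T.F.mapIso (BC.τ₂ c e)).app d).hom)
  exact (cancel_epi _).mp h

end EBilinearBifunctor

theorem statement3_general
    {E : Type u} [Category.{v} E] [MonoidalCategory E] [SymmetricCategory E]
    {C : Type*} [Category C] {D : Type*} [Category D] {W : Type*} [Category W]
    {MC : LeftModuleCatStruct E C} {BC : MC.ModuleBraiding}
    {MD : LeftModuleCatStruct E D} {BD : MD.ModuleBraiding}
    {MW : LeftModuleCatStruct E W} {BW : MW.ModuleBraiding}
    (Fb Gb : BraidingPreservedBifunctor MC BC MD BD MW BW)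
    (α : ∀ (c : C) (d : D), (Fb.F.obj c).obj d ⟶ (Gb.F.obj c).obj d)
    (α_nat_c : ∀ {c c' : C} (f : c ⟶ c') (d : D),
      (Fb.F.map f).app d ≫ α c' d = α c d ≫ (Gb.F.map f).app d)
    (α_balanced : ∀ (c : C) (e : E) (d : D),
      Fb.toEBilinearBifunctor.bal BC c e d ≫ α c (MD.smul e d) =
        α (MC.smul e c) d ≫ Gb.toEBilinearBifunctor.bal BC c e d)
    (α_module₁ : ∀ (e : E) (c : C) (d : D),
      α (MC.smul e c) d ≫ (Gb.s₁ e c d).hom =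
        (Fb.s₁ e c d).hom ≫ (MW.act.obj e).map (α c d)) :
    ∀ (e : E) (c : C) (d : D),
      α c (MD.smul e d) ≫ (Gb.s₂ e c d).hom =
        (Fb.s₂ e c d).hom ≫ (MW.act.obj e).map (α c d) := fun e c d =>
  EBilinearBifunctor.s₂_comp_of_bhat_comp _ _ α (α_module₁ e c d)
    (EBilinearBifunctor.bhat_comp_of_bal_comp _ _ BC α α_nat_c (α_balanced c e d))

/-- Proposition 2.8 of the paper.
Let `F, G : C × D → W` be braiding-preserved `E`-bilinear bifunctors between braided
`E`-modules and let `α : F ⇒ G` be a natural transformation which is a balanced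
`E`-module natural transformation and, for each `d`, a left `E`-module natural
transformation `(F(−,d), s^{F1}) ⇒ (G(−,d), s^{G1})`.  Then for each `c`, `α` is a left
`E`-module natural transformation `(F(c,−), s^{F2}) ⇒ (G(c,−), s^{G2})`, i.e.
`s^{G2}_{e,d} ∘ α_{c, e ⊙ d} = (1_e ⊙ α_{c,d}) ∘ s^{F2}_{e,d}` for all `e`, `d`. -/
theorem statement3
    {k : Type*} [Field k] [IsAlgClosed k] [CharZero k]
    {E : Type u} [Category.{v} E] [MonoidalCategory E] [SymmetricCategory E]
    [Preadditive E] [CategoryTheory.Linear k E]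
    {C : Type*} [Category C] {D : Type*} [Category D] {W : Type*} [Category W]
    [Preadditive C] [CategoryTheory.Linear k C]
    [Preadditive D] [CategoryTheory.Linear k D]
    [Preadditive W] [CategoryTheory.Linear k W]
    {MC : LeftModuleCatStruct E C} {BC : MC.ModuleBraiding}
    {MD : LeftModuleCatStruct E D} {BD : MD.ModuleBraiding}
    {MW : LeftModuleCatStruct E W} {BW : MW.ModuleBraiding}
    (Fb Gb : BraidingPreservedBifunctor MC BC MD BD MW BW)
    (α : ∀ (c : C) (d : D), (Fb.F.obj c).obj d ⟶ (Gb.F.obj c).obj d)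
    (α_nat_c : ∀ {c c' : C} (f : c ⟶ c') (d : D),
      (Fb.F.map f).app d ≫ α c' d = α c d ≫ (Gb.F.map f).app d)
    (α_nat_d : ∀ (c : C) {d d' : D} (g : d ⟶ d'),
      (Fb.F.obj c).map g ≫ α c d' = α c d ≫ (Gb.F.obj c).map g)
    (α_balanced : ∀ (c : C) (e : E) (d : D),
      Fb.toEBilinearBifunctor.bal BC c e d ≫ α c (MD.smul e d) =
        α (MC.smul e c) d ≫ Gb.toEBilinearBifunctor.bal BC c e d)
    (α_module₁ : ∀ (e : E) (c : C) (d : D),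
      α (MC.smul e c) d ≫ (Gb.s₁ e c d).hom =
        (Fb.s₁ e c d).hom ≫ (MW.act.obj e).map (α c d)) :
    ∀ (e : E) (c : C) (d : D),
      α c (MD.smul e d) ≫ (Gb.s₂ e c d).hom =
        (Fb.s₂ e c d).hom ≫ (MW.act.obj e).map (α c d) :=
  statement3_general Fb Gb α α_nat_c α_balanced α_module₁
end

section
/- Let F: C × D → W be a braiding-preserved E-bilinear bifunctor between braided E-modules. Then for all objects e₁, e₂ of E, c of C and d of D, the following pentagon commutes: (r_{e₂,e₁} ⊙ 1_{F(c,d)}) ∘ (1_{e₂} ⊙ s^{F1}_{e₁,c}) ∘ s^{F2}_{e₂,d} = (1_{e₁} ⊙ s^{F2}_{e₂,d}) ∘ s^{F1}_{e₁,c} as morphisms F(e₁⊙c, e₂⊙d) → e₁⊙e₂⊙F(c,d), where r is the braiding of E. -/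
open CategoryTheory MonoidalCategory Category

universe v u v' u'

/-!
Write `b̂ = (s²)⁻¹ ∘ s¹`, so that the balancing is `b = b̂ ∘ F(τ², 1)`. The module-braiding
axioms express `τ²_{c, e₁ ⊗ e₂}` through `τ²_{c,e₂}` and `τ²_{e₂ ⊙ c, e₁}` (a hexagon), so in the
balancing condition for `e₁ ⊗ e₂` all the `τ²` factors cancel. What remains says that `b̂`
commutes with `s¹` up to the exchange `e₁ ⊙ e₂ ⊙ - ≅ e₂ ⊙ e₁ ⊙ -`. Since `s¹`, being an
`E`-module structure, is itself compatible with the exchange, and the exchange is involutive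
because `E` is symmetric, this is the pentagon.
-/

namespace LeftModuleCatStruct

variable {E : Type u} [Category.{v} E] [MonoidalCategory E]
variable {C : Type u'} [Category.{v'} C] (M : LeftModuleCatStruct E C)

/- `smulMap` and `mapSmul` are `(M.act.obj e).map f` and `(M.act.map g).app x` typed between
`M.smul` objects. Composites of the latter with `τ`, `μ` or `ex` typecheck only up to unfolding
`smul`, which defeats `rw` and `simp`; normalising with `act_obj_obj`, `act_obj_map` and
`act_map_app` removes the mismatch. -/
def smulMap (e : E) {x y : C} (f : x ⟶ y) : M.smul e x ⟶ M.smul e y := (M.act.obj e).map f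

def mapSmul {e e' : E} (g : e ⟶ e') (x : C) : M.smul e x ⟶ M.smul e' x := (M.act.map g).app x

lemma act_obj_obj (e : E) (x : C) : (M.act.obj e).obj x = M.smul e x := rfl

lemma act_obj_map (e : E) {x y : C} (f : x ⟶ y) : (M.act.obj e).map f = M.smulMap e f := rfl

lemma act_map_app {e e' : E} (g : e ⟶ e') (x : C) : (M.act.map g).app x = M.mapSmul g x := rfl

lemma smulMap_comp (e : E) {x y z : C} (f : x ⟶ y) (g : y ⟶ z) :
    M.smulMap e (f ≫ g) = M.smulMap e f ≫ M.smulMap e g :=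
  (M.act.obj e).map_comp f g

lemma smulMap_id (e : E) (x : C) : M.smulMap e (𝟙 x) = 𝟙 (M.smul e x) :=
  (M.act.obj e).map_id x

lemma smulMap_hom_inv_id (e : E) {x y : C} (f : x ≅ y) :
    M.smulMap e f.hom ≫ M.smulMap e f.inv = 𝟙 (M.smul e x) := by
  rw [← smulMap_comp, f.hom_inv_id, smulMap_id]

lemma ex_hom [BraidedCategory E] (e e' : E) (x : C) :
    (M.ex e e' x).hom = (M.μ e e' x).inv ≫ M.mapSmul (β_ e e').hom x ≫ (M.μ e' e x).hom :=
  rfl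

lemma ex_inv [SymmetricCategory E] (e e' : E) (x : C) :
    (M.ex e e' x).inv = (M.ex e' e x).hom := by
  refine Iso.inv_ext ?_
  have hβ : (M.act.map (β_ e e').hom).app x ≫ (M.act.map (β_ e' e).hom).app x = 𝟙 _ := by
    rw [← NatTrans.comp_app, ← Functor.map_comp, SymmetricCategory.symmetry]
    simp
  simp [ex, smul, reassoc_of% hβ]

variable {M}

lemma ModuleBraiding.τ₂_smul [BraidedCategory E] (B : M.ModuleBraiding) (e e' : E) (x : C) :
    (B.τ₂ (M.smul e' x) e).hom =
      (M.ex e e' x).hom ≫ M.smulMap e' (B.τ₂ x e).hom ≫ (M.ex e' e x).hom :=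
  (Iso.inv_comp_eq _).1 (B.act_braiding₂ e e' x)

lemma ModuleBraiding.τ₂_tensor_hexagon [SymmetricCategory E] (B : M.ModuleBraiding)
    (e₁ e₂ : E) (x : C) :
    (B.τ₂ x (e₁ ⊗ e₂)).hom ≫ (M.μ e₁ e₂ x).hom ≫ (M.ex e₁ e₂ x).hom =
      (M.rAssoc e₁ e₂ x).hom ≫ (B.τ₂ (M.smul e₁ x) e₂).hom ≫ M.smulMap e₂ (B.τ₂ x e₁).hom := by
  have hconj : M.smulMap e₂ (B.τ₂ x e₁).hom =
      (M.ex e₁ e₂ x).inv ≫ (B.τ₂ (M.smul e₂ x) e₁).hom ≫ (M.ex e₁ e₂ x).hom := by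
    simp [B.τ₂_smul, ← ex_inv M e₁ e₂ x]
  have hτ := B.tensor_braiding₂ e₁ e₂ x
  have hnat := B.τ₂_nat_right e₁ (B.τ₂ x e₂).hom
  simp only [act_obj_obj, act_obj_map] at hτ hnat
  rw [← Iso.inv_comp_eq, reassoc_of% hτ, B.τ₂_smul e₂ e₁, hconj, ← ex_inv M e₁ e₂ x]
  simp [reassoc_of% hnat]

end LeftModuleCatStruct

namespace EBilinearBifunctor

open LeftModuleCatStruct

variable {E : Type u} [Category.{v} E] [MonoidalCategory E]
variable {C : Type*} [Category C] {D : Type*} [Category D] {W : Type*} [Category W]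
variable {MC : LeftModuleCatStruct E C} {MD : LeftModuleCatStruct E D}
  {MW : LeftModuleCatStruct E W} (T : EBilinearBifunctor MC MD MW)

instance isIso_bhat (c : C) (e : E) (d : D) : IsIso (T.bhat c e d) := by
  rw [bhat]
  infer_instance

lemma bhat_naturality (e : E) {x y : C} (g : x ⟶ y) (d : D) :
    (T.F.map (MC.smulMap e g)).app d ≫ T.bhat y e d =
      T.bhat x e d ≫ (T.F.map g).app (MD.smul e d) := by
  have h₁ := T.s₁_nat_c e g d
  have h₂ := T.s₂_nat_c e g d
  simp only [act_obj_obj, act_obj_map] at h₁ h₂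
  rw [bhat, bhat, reassoc_of% h₁, assoc, cancel_epi, Iso.eq_inv_comp, ← reassoc_of% h₂,
    Iso.hom_inv_id, comp_id]

lemma bhat_tensor (e₁ e₂ : E) (c : C) (d : D) :
    T.bhat c (e₁ ⊗ e₂) d ≫ (T.F.obj c).map (MD.μ e₁ e₂ d).hom =
      (T.F.map (MC.μ e₁ e₂ c).hom).app d ≫ (T.s₁ e₁ (MC.smul e₂ c) d).hom ≫
        MW.smulMap e₁ (T.bhat c e₂ d) ≫ (T.s₂ e₁ c (MD.smul e₂ d)).inv := by
  have h₁ := T.s₁_tensor e₁ e₂ c d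
  have h₂ := T.s₂_tensor e₁ e₂ c d
  simp only [act_obj_obj, act_obj_map] at h₁ h₂
  rw [bhat, bhat, smulMap_comp, assoc, assoc, reassoc_of% h₁, cancel_epi, Iso.inv_comp_eq,
    ← reassoc_of% h₂]
  simp [reassoc_of% (MW.smulMap_hom_inv_id e₁ (T.s₂ e₂ c d))]

lemma bal_eq [BraidedCategory E] (BC : MC.ModuleBraiding) (c : C) (e : E) (d : D) :
    T.bal BC c e d = (T.F.map (BC.τ₂ c e).hom).app d ≫ T.bhat c e d :=
  rfl

lemma s₁_ex [BraidedCategory E] (e₁ e₂ : E) (c : C) (d : D) :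
    (T.F.map (MC.ex e₁ e₂ c).hom).app d ≫ (T.s₁ e₂ (MC.smul e₁ c) d).hom ≫
        MW.smulMap e₂ (T.s₁ e₁ c d).hom =
      (T.s₁ e₁ (MC.smul e₂ c) d).hom ≫ MW.smulMap e₁ (T.s₁ e₂ c d).hom ≫
        (MW.ex e₁ e₂ ((T.F.obj c).obj d)).hom := by
  have h₁₂ := T.s₁_tensor e₁ e₂ c d
  have h₂₁ := T.s₁_tensor e₂ e₁ c d
  have hβ := T.s₁_nat_e (β_ e₁ e₂).hom c d
  simp only [act_obj_obj, act_obj_map, act_map_app] at h₁₂ h₂₁ hβ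
  rw [← cancel_epi ((T.F.map (MC.μ e₁ e₂ c).hom).app d), reassoc_of% h₁₂, ex_hom, ex_hom]
  simp only [Functor.map_comp, NatTrans.comp_app, assoc]
  rw [h₂₁, reassoc_of% hβ]
  simp

end EBilinearBifunctor

lemma BraidingPreservedBifunctor.bhat_smul
    {E : Type u} [Category.{v} E] [MonoidalCategory E] [SymmetricCategory E]
    {C : Type*} [Category C] {D : Type*} [Category D] {W : Type*} [Category W]
    {MC : LeftModuleCatStruct E C} {BC : MC.ModuleBraiding}
    {MD : LeftModuleCatStruct E D} {BD : MD.ModuleBraiding}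
    {MW : LeftModuleCatStruct E W} {BW : MW.ModuleBraiding}
    (T : BraidingPreservedBifunctor MC BC MD BD MW BW) (e₁ e₂ : E) (c : C) (d : D) :
    (T.F.map (MC.ex e₁ e₂ c).hom).app d ≫ T.bhat (MC.smul e₁ c) e₂ d ≫
        (T.s₁ e₁ c (MD.smul e₂ d)).hom =
      (T.s₁ e₁ (MC.smul e₂ c) d).hom ≫ MW.smulMap e₁ (T.bhat c e₂ d) := by
  have hexagon := congrArg (fun f => (T.F.map f).app d) (BC.τ₂_tensor_hexagon e₁ e₂ c)
  have h := T.balanced_tensor e₁ e₂ c d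
  simp only [Functor.map_comp, NatTrans.comp_app] at hexagon
  simp only [EBilinearBifunctor.bal_eq, assoc] at h
  rw [← reassoc_of% (T.bhat_naturality e₂ (BC.τ₂ c e₁).hom d), T.bhat_tensor,
    ← reassoc_of% hexagon, cancel_epi, cancel_epi] at h
  rw [← cancel_mono (T.s₂ e₁ c (MD.smul e₂ d)).inv]
  simpa [EBilinearBifunctor.bhat] using h

theorem statement4_general
    {E : Type u} [Category.{v} E] [MonoidalCategory E] [SymmetricCategory E]
    {C : Type*} [Category C] {D : Type*} [Category D] {W : Type*} [Category W]
    {MC : LeftModuleCatStruct E C} {BC : MC.ModuleBraiding}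
    {MD : LeftModuleCatStruct E D} {BD : MD.ModuleBraiding}
    {MW : LeftModuleCatStruct E W} {BW : MW.ModuleBraiding}
    (T : BraidingPreservedBifunctor MC BC MD BD MW BW) :
    ∀ (e₁ e₂ : E) (c : C) (d : D),
      (T.s₂ e₂ (MC.smul e₁ c) d).hom ≫ (MW.act.obj e₂).map (T.s₁ e₁ c d).hom ≫
          (MW.ex e₂ e₁ ((T.F.obj c).obj d)).hom =
        (T.s₁ e₁ c (MD.smul e₂ d)).hom ≫ (MW.act.obj e₁).map (T.s₂ e₂ c d).hom := by
  intro e₁ e₂ c d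
  simp only [LeftModuleCatStruct.act_obj_obj, LeftModuleCatStruct.act_obj_map]
  rw [← cancel_epi ((T.F.map (MC.ex e₁ e₂ c).hom).app d ≫ T.bhat (MC.smul e₁ c) e₂ d),
    assoc, assoc, reassoc_of% (T.bhat_smul e₁ e₂ c d)]
  simp [EBilinearBifunctor.bhat, ← LeftModuleCatStruct.smulMap_comp,
    reassoc_of% (T.s₁_ex e₁ e₂ c d), ← MW.ex_inv e₁ e₂]

/-- Proposition 2.9, diagram (2.8) of the paper.
Let `F : C × D → W` be a braiding-preserved `E`-bilinear bifunctor between braided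
`E`-modules.  Then for all `e₁, e₂ : E`, `c : C`, `d : D` the pentagon
`(r_{e₂,e₁} ⊙ 1_{F(c,d)}) ∘ (1_{e₂} ⊙ s^{F1}_{e₁,c}) ∘ s^{F2}_{e₂,d}
  = (1_{e₁} ⊙ s^{F2}_{e₂,d}) ∘ s^{F1}_{e₁,c}`
commutes, as morphisms `F(e₁ ⊙ c, e₂ ⊙ d) ⟶ e₁ ⊙ e₂ ⊙ F(c, d)`
(the action of the braiding `r_{e₂,e₁}` on `e₂ ⊙ (e₁ ⊙ F(c,d))` being encoded by
the canonical exchange isomorphism `MW.ex`). -/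
theorem statement4
    {k : Type*} [Field k] [IsAlgClosed k] [CharZero k]
    {E : Type u} [Category.{v} E] [MonoidalCategory E] [SymmetricCategory E]
    [Preadditive E] [CategoryTheory.Linear k E]
    {C : Type*} [Category C] {D : Type*} [Category D] {W : Type*} [Category W]
    [Preadditive C] [CategoryTheory.Linear k C]
    [Preadditive D] [CategoryTheory.Linear k D]
    [Preadditive W] [CategoryTheory.Linear k W]
    {MC : LeftModuleCatStruct E C} {BC : MC.ModuleBraiding}
    {MD : LeftModuleCatStruct E D} {BD : MD.ModuleBraiding}
    {MW : LeftModuleCatStruct E W} {BW : MW.ModuleBraiding}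
    (T : BraidingPreservedBifunctor MC BC MD BD MW BW) :
    ∀ (e₁ e₂ : E) (c : C) (d : D),
      (T.s₂ e₂ (MC.smul e₁ c) d).hom ≫ (MW.act.obj e₂).map (T.s₁ e₁ c d).hom ≫
          (MW.ex e₂ e₁ ((T.F.obj c).obj d)).hom =
        (T.s₁ e₁ c (MD.smul e₂ d)).hom ≫ (MW.act.obj e₁).map (T.s₂ e₂ c d).hom :=
  statement4_general T
end

section
/- Let F: C × D → W be a braiding-preserved E-bilinear bifunctor between braided E-modules, with balanced structure b and with b̂_{c,e,d} := (s^{F2}_{e,d})^{-1} ∘ s^{F1}_{e,c}: F(e⊙c, d) → F(c, e⊙d). Then for all objects e₁, e₂ of E, c of C and d of D, the following square commutes: F(1_c, r_{e₁,e₂} ⊙ 1_d) ∘ b̂_{c, e₁, e₂⊙d} ∘ b_{e₁⊙c, e₂, d} = b_{c, e₂, e₁⊙d} ∘ b̂_{c⊙e₂, e₁, d} (as morphisms F((e₁⊙c)⊙e₂, d) = F(e₁⊙(c⊙e₂), d) → F(c, e₂⊙e₁⊙d)). -/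
/-!
Statement 0.

Let `E` be a symmetric fusion category (over an algebraically closed field `k` of
characteristic zero) with braiding `r = β_`, and let `(C, τ)` be a braided `E`-module,
i.e. a (finite semisimple) left `E`-module category equipped with an `E`-module braiding
`τ = τ² ∘ τ¹` (where the right `E`-action on `C` is induced from the left action,
`x ⊙ e := e ⊙ x`, and all structural identifications are made explicit via the
action associator `μ`, the induced right-associator `rAssoc` and the middle-exchange
isomorphism `ex`).

Then for all `e e' : E` and `x : C`:
* `τ¹_{e, x ⊙ e'} = (1_x ⊙ r_{e,e'}) ∘ (τ¹_{e,x} ⊙ 1_{e'})` as morphisms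
  `e ⊙ x ⊙ e' ⟶ x ⊙ e' ⊙ e`, and
* `τ²_{x ⊙ e', e} = (τ²_{x,e} ⊙ 1_{e'}) ∘ (1_x ⊙ r_{e',e})` as morphisms
  `x ⊙ e' ⊙ e ⟶ e ⊙ x ⊙ e'`.
-/

open CategoryTheory MonoidalCategory Category

universe v u v' u'

/-! Since `b = F(τ², 1) ≫ b̂`, naturality of `b` together with its compatibility with `⊗`
(`balanced_tensor`) brings both sides of the square into the form
`F(φ, 1) ≫ b_{c, e₁ ⊗ e₂, d} ≫ F(1, ψ ≫ μ)`. On the `D` side `μ ≫ ex = (r ⊙ 1) ≫ μ`, and `r ⊙ 1`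
passes through `b` by naturality in `E`. What is left is an identity between two morphisms
`φ` in `C`, which follows from the compatibility of `τ²` with the action (second diagram of
(2.1)) and the symmetry `r_{e₂,e₁} ∘ r_{e₁,e₂} = 1` of `E`. -/

namespace LeftModuleCatStruct

variable {E : Type u} [Category.{v} E] [MonoidalCategory E]
variable {C : Type u'} [Category.{v'} C] (M : LeftModuleCatStruct E C)

-- `f ⊙ x` and `e ⊙ g`, typed with `smul` so that they can be rewritten next to `μ`, `ex` and
-- `rAssoc` without unfolding `smul`.
def actionHomLeft {e e' : E} (f : e ⟶ e') (x : C) : M.smul e x ⟶ M.smul e' x :=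
  (M.act.map f).app x

def actionHomRight (e : E) {x y : C} (g : x ⟶ y) : M.smul e x ⟶ M.smul e y :=
  (M.act.obj e).map g

lemma μ_hom_comp_ex_hom [BraidedCategory E] (e e' : E) (x : C) :
    (M.μ e e' x).hom ≫ (M.ex e e' x).hom = M.actionHomLeft (β_ e e').hom x ≫ (M.μ e' e x).hom := by
  dsimp only [ex, μ, actionHomLeft, smul]
  simp

lemma ex_hom_comp_rAssoc_inv_comp_actionHomLeft [SymmetricCategory E] (e e' : E) (x : C) :
    (M.ex e e' x).hom ≫ (M.rAssoc e e' x).inv ≫ M.actionHomLeft (β_ e e').hom x =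
      (M.rAssoc e' e x).inv := by
  dsimp only [ex, rAssoc, actionHomLeft, smul]
  simp [← SymmetricCategory.braiding_swap_eq_inv_braiding e' e]

namespace ModuleBraiding

variable {M}

lemma actionHomRight_τ₂_inv [BraidedCategory E] (B : M.ModuleBraiding) (e e' : E) (x : C) :
    M.actionHomRight e' (B.τ₂ x e).inv =
      (M.ex e' e x).hom ≫ (B.τ₂ (M.smul e' x) e).inv ≫ (M.ex e e' x).hom := by
  have h : (M.ex e e' x).symm ≪≫ B.τ₂ (M.smul e' x) e =
      (M.act.obj e').mapIso (B.τ₂ x e) ≪≫ M.ex e' e x :=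
    Iso.ext (B.act_braiding₂ e e' x)
  exact (Iso.inv_comp_eq _).1 (congrArg Iso.inv h).symm

lemma actionHomRight_τ₂_inv_comp_rAssoc_inv [SymmetricCategory E] (B : M.ModuleBraiding)
    (e e' : E) (x : C) :
    M.actionHomRight e' (B.τ₂ x e).inv ≫ (M.rAssoc e e' x).inv ≫ M.actionHomLeft (β_ e e').hom x =
      (M.ex e' e x).hom ≫ (B.τ₂ (M.smul e' x) e).inv ≫ (M.rAssoc e' e x).inv := by
  rw [B.actionHomRight_τ₂_inv]
  simp only [Category.assoc, M.ex_hom_comp_rAssoc_inv_comp_actionHomLeft]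

end ModuleBraiding

end LeftModuleCatStruct

namespace EBilinearBifunctor

variable {E : Type u} [Category.{v} E] [MonoidalCategory E]
variable {C : Type*} [Category C] {D : Type*} [Category D] {W : Type*} [Category W]
variable {MC : LeftModuleCatStruct E C} {MD : LeftModuleCatStruct E D}
  {MW : LeftModuleCatStruct E W} (T : EBilinearBifunctor MC MD MW)

lemma bhat_nat_c (e : E) {x y : C} (f : x ⟶ y) (d : D) :
    (T.F.map (MC.actionHomRight e f)).app d ≫ T.bhat y e d =
      T.bhat x e d ≫ (T.F.map f).app (MD.smul e d) := by
  have h₁ : (T.F.map (MC.actionHomRight e f)).app d ≫ (T.s₁ e y d).hom =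
      (T.s₁ e x d).hom ≫ MW.actionHomRight e ((T.F.map f).app d) :=
    T.s₁_nat_c e f d
  have h₂ : MW.actionHomRight e ((T.F.map f).app d) ≫ (T.s₂ e y d).inv =
      (T.s₂ e x d).inv ≫ (T.F.map f).app (MD.smul e d) := by
    rw [Iso.comp_inv_eq, Category.assoc, Iso.eq_inv_comp]
    exact (T.s₂_nat_c e f d).symm
  simp only [bhat, reassoc_of% h₁, h₂, Category.assoc]

lemma bhat_nat_e {e e' : E} (f : e ⟶ e') (c : C) (d : D) :
    (T.F.map (MC.actionHomLeft f c)).app d ≫ T.bhat c e' d =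
      T.bhat c e d ≫ (T.F.obj c).map (MD.actionHomLeft f d) := by
  have h₁ : (T.F.map (MC.actionHomLeft f c)).app d ≫ (T.s₁ e' c d).hom =
      (T.s₁ e c d).hom ≫ MW.actionHomLeft f ((T.F.obj c).obj d) :=
    T.s₁_nat_e f c d
  have h₂ : MW.actionHomLeft f ((T.F.obj c).obj d) ≫ (T.s₂ e' c d).inv =
      (T.s₂ e c d).inv ≫ (T.F.obj c).map (MD.actionHomLeft f d) := by
    rw [Iso.comp_inv_eq, Category.assoc, Iso.eq_inv_comp]
    exact (T.s₂_nat_e f c d).symm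
  simp only [bhat, reassoc_of% h₁, h₂, Category.assoc]

variable [BraidedCategory E] (BC : MC.ModuleBraiding)

lemma bhat_eq (c : C) (e : E) (d : D) :
    T.bhat c e d = (T.F.map (BC.τ₂ c e).inv).app d ≫ T.bal BC c e d := by
  simp only [bal, bhat, ← NatTrans.comp_app_assoc, ← Functor.map_comp, Iso.inv_hom_id,
    CategoryTheory.Functor.map_id, NatTrans.id_app, Category.id_comp]

lemma bal_nat_c (e : E) {x y : C} (f : x ⟶ y) (d : D) :
    (T.F.map (MC.actionHomRight e f)).app d ≫ T.bal BC y e d =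
      T.bal BC x e d ≫ (T.F.map f).app (MD.smul e d) := by
  have hτ : MC.actionHomRight e f ≫ (BC.τ₂ y e).hom = (BC.τ₂ x e).hom ≫ MC.actionHomRight e f :=
    BC.τ₂_nat_right e f
  change _ ≫ (T.F.map (BC.τ₂ y e).hom).app d ≫ T.bhat y e d =
    ((T.F.map (BC.τ₂ x e).hom).app d ≫ T.bhat x e d) ≫ _
  rw [← NatTrans.comp_app_assoc, ← Functor.map_comp, hτ, Functor.map_comp, NatTrans.comp_app,
    Category.assoc, bhat_nat_c, Category.assoc]

lemma bal_nat_e {e e' : E} (f : e ⟶ e') (c : C) (d : D) :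
    (T.F.map (MC.actionHomLeft f c)).app d ≫ T.bal BC c e' d =
      T.bal BC c e d ≫ (T.F.obj c).map (MD.actionHomLeft f d) := by
  have hτ : MC.actionHomLeft f c ≫ (BC.τ₂ c e').hom = (BC.τ₂ c e).hom ≫ MC.actionHomLeft f c :=
    BC.τ₂_nat_left f c
  change _ ≫ (T.F.map (BC.τ₂ c e').hom).app d ≫ T.bhat c e' d =
    ((T.F.map (BC.τ₂ c e).hom).app d ≫ T.bhat c e d) ≫ _
  rw [← NatTrans.comp_app_assoc, ← Functor.map_comp, hτ, Functor.map_comp, NatTrans.comp_app,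
    Category.assoc, bhat_nat_e, Category.assoc]

end EBilinearBifunctor

namespace BraidingPreservedBifunctor

variable {E : Type u} [Category.{v} E] [MonoidalCategory E] [BraidedCategory E]
variable {C : Type*} [Category C] {D : Type*} [Category D] {W : Type*} [Category W]
variable {MC : LeftModuleCatStruct E C} {BC : MC.ModuleBraiding}
  {MD : LeftModuleCatStruct E D} {BD : MD.ModuleBraiding}
  {MW : LeftModuleCatStruct E W} {BW : MW.ModuleBraiding}
  (T : BraidingPreservedBifunctor MC BC MD BD MW BW)

lemma bal_comp_bal (e e' : E) (c : C) (d : D) :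
    T.bal BC (MC.smul e c) e' d ≫ T.bal BC c e (MD.smul e' d) =
      (T.F.map (MC.rAssoc e e' c).inv).app d ≫ T.bal BC c (e ⊗ e') d ≫
        (T.F.obj c).map (MD.μ e e' d).hom := by
  rw [← T.balanced_tensor, ← NatTrans.comp_app_assoc, ← Functor.map_comp, Iso.inv_hom_id,
    CategoryTheory.Functor.map_id, NatTrans.id_app, Category.id_comp]

lemma bal_comp_bhat (e e' : E) (c : C) (d : D) :
    T.bal BC (MC.smul e c) e' d ≫ T.bhat c e (MD.smul e' d) =
      (T.F.map (MC.actionHomRight e' (BC.τ₂ c e).inv ≫ (MC.rAssoc e e' c).inv)).app d ≫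
        T.bal BC c (e ⊗ e') d ≫ (T.F.obj c).map (MD.μ e e' d).hom := by
  rw [T.bhat_eq BC, ← reassoc_of% (T.bal_nat_c BC e' (BC.τ₂ c e).inv d), T.bal_comp_bal,
    Functor.map_comp, NatTrans.comp_app, Category.assoc]

lemma bhat_comp_bal (e e' : E) (c : C) (d : D) :
    T.bhat (MC.smul e c) e' d ≫ T.bal BC c e (MD.smul e' d) =
      (T.F.map ((BC.τ₂ (MC.smul e c) e').inv ≫ (MC.rAssoc e e' c).inv)).app d ≫
        T.bal BC c (e ⊗ e') d ≫ (T.F.obj c).map (MD.μ e e' d).hom := by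
  rw [T.bhat_eq BC, Category.assoc, T.bal_comp_bal, Functor.map_comp, NatTrans.comp_app,
    Category.assoc]

end BraidingPreservedBifunctor

theorem statement5_general
    {E : Type u} [Category.{v} E] [MonoidalCategory E] [SymmetricCategory E]
    {C : Type*} [Category C] {D : Type*} [Category D] {W : Type*} [Category W]
    {MC : LeftModuleCatStruct E C} {BC : MC.ModuleBraiding}
    {MD : LeftModuleCatStruct E D} {BD : MD.ModuleBraiding}
    {MW : LeftModuleCatStruct E W} {BW : MW.ModuleBraiding}
    (T : BraidingPreservedBifunctor MC BC MD BD MW BW) :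
    ∀ (e₁ e₂ : E) (c : C) (d : D),
      T.toEBilinearBifunctor.bal BC (MC.smul e₁ c) e₂ d ≫
          T.toEBilinearBifunctor.bhat c e₁ (MD.smul e₂ d) ≫
          (T.F.obj c).map (MD.ex e₁ e₂ d).hom =
        (T.F.map (MC.ex e₂ e₁ c).hom).app d ≫
          T.toEBilinearBifunctor.bhat (MC.smul e₂ c) e₁ d ≫
          T.toEBilinearBifunctor.bal BC c e₂ (MD.smul e₁ d) := by
  intro e₁ e₂ c d
  rw [reassoc_of% T.bal_comp_bhat, T.bhat_comp_bal, ← Functor.map_comp, MD.μ_hom_comp_ex_hom,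
    (T.F.obj c).map_comp, ← reassoc_of% T.bal_nat_e]
  simp only [← NatTrans.comp_app_assoc, ← Functor.map_comp, Category.assoc,
    BC.actionHomRight_τ₂_inv_comp_rAssoc_inv]

/-- Proposition 2.10, diagram (2.9) of the paper.
Let `F : C × D → W` be a braiding-preserved `E`-bilinear bifunctor between braided
`E`-modules, with balanced structure `b` and with
`b̂_{c,e,d} := (s^{F2}_{e,d})⁻¹ ∘ s^{F1}_{e,c} : F(e ⊙ c, d) → F(c, e ⊙ d)`.
Then for all `e₁, e₂ : E`, `c : C`, `d : D`:
`F(1_c, r_{e₁,e₂} ⊙ 1_d) ∘ b̂_{c,e₁,e₂ ⊙ d} ∘ b_{e₁ ⊙ c, e₂, d}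
  = b_{c, e₂, e₁ ⊙ d} ∘ b̂_{c ⊙ e₂, e₁, d}`
as morphisms `F((e₁ ⊙ c) ⊙ e₂, d) = F(e₁ ⊙ (c ⊙ e₂), d) ⟶ F(c, e₂ ⊙ e₁ ⊙ d)`
(the identifications being the canonical exchange isomorphisms `MC.ex` and `MD.ex`). -/
theorem statement5
    {k : Type*} [Field k] [IsAlgClosed k] [CharZero k]
    {E : Type u} [Category.{v} E] [MonoidalCategory E] [SymmetricCategory E]
    [Preadditive E] [CategoryTheory.Linear k E]
    {C : Type*} [Category C] {D : Type*} [Category D] {W : Type*} [Category W]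
    [Preadditive C] [CategoryTheory.Linear k C]
    [Preadditive D] [CategoryTheory.Linear k D]
    [Preadditive W] [CategoryTheory.Linear k W]
    {MC : LeftModuleCatStruct E C} {BC : MC.ModuleBraiding}
    {MD : LeftModuleCatStruct E D} {BD : MD.ModuleBraiding}
    {MW : LeftModuleCatStruct E W} {BW : MW.ModuleBraiding}
    (T : BraidingPreservedBifunctor MC BC MD BD MW BW) :
    ∀ (e₁ e₂ : E) (c : C) (d : D),
      T.toEBilinearBifunctor.bal BC (MC.smul e₁ c) e₂ d ≫
          T.toEBilinearBifunctor.bhat c e₁ (MD.smul e₂ d) ≫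
          (T.F.obj c).map (MD.ex e₁ e₂ d).hom =
        (T.F.map (MC.ex e₂ e₁ c).hom).app d ≫
          T.toEBilinearBifunctor.bhat (MC.smul e₂ c) e₁ d ≫
          T.toEBilinearBifunctor.bal BC c e₂ (MD.smul e₁ d) :=
  statement5_general T
end
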